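/- arXiv:1508.00159 — 4 statements merged into one kernel-verified Lean document; each statement's English description precedes it below -/
import Mathlib

section
/- Let 0 → B → C → A → 0 be a short exact sequence of finitely generated abelian groups; that is, there are an injective group homomorphism i : B → C and a surjective group homomorphism p : C → A with range(i) = ker(p). If C is isomorphic to A ⊕ B as an abelian group, then the sequence splits: there exists a group homomorphism s : A → C with p ∘ s = id_A. -/
/-! Write `A ≅ ℤⁿ ⊕ D` with `D` finite. The free summand lifts along `p` by projectivity.
For finite `T`, the functor `Hom(T, -)` is left exact, so the kernel of
`Hom(T, C) → Hom(T, A)` is `Hom(T, B)`; these groups are finite, and `C ≅ A ⊕ B` gives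
`|Hom(T, C)| = |Hom(T, A)| · |Hom(T, B)|`. Counting, `Hom(T, C) → Hom(T, A)` is onto, so the
summand `D` lifts as well. -/

open Function

theorem finite_addMonoidHom_of_finite (T X : Type*) [AddCommGroup T] [AddCommGroup X]
    [Finite T] [AddGroup.FG X] : Finite (T →+ X) := by
  have : Module.Finite ℤ X := Module.Finite.iff_addGroup_fg.mpr ‹_›
  have : Module.Finite ℤ (T →+ X) :=
    .of_injective (AddMonoidHom.coeFn T X).toIntLinearMap DFunLike.coe_injective
  have : AddGroup.FG (T →+ X) := Module.Finite.iff_addGroup_fg.mp this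
  refine AddCommGroup.finite_of_fg_isAddTorsion _ fun f ↦ ?_
  refine isOfFinAddOrder_iff_nsmul_eq_zero.mpr ⟨Nat.card T, Nat.card_pos, ?_⟩
  ext t
  rw [AddMonoidHom.nsmul_apply, ← map_nsmul, card_nsmul_eq_zero', map_zero,
    AddMonoidHom.zero_apply]

theorem AddMonoidHom.surjective_of_card_eq_card_mul_card_ker {M N : Type*} [AddGroup M]
    [AddGroup N] [Finite M] (f : M →+ N) (h : Nat.card M = Nat.card N * Nat.card f.ker) :
    Surjective f := by
  have hrange : Nat.card f.range = Nat.card N := by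
    have := f.ker.card_mul_index
    rw [AddSubgroup.index_ker, h, mul_comm] at this
    exact Nat.eq_of_mul_eq_mul_right Nat.card_pos this
  have : Finite f.range := .of_surjective _ f.rangeRestrict_surjective
  exact AddMonoidHom.range_eq_top.mp (AddSubgroup.eq_top_of_card_eq _ hrange)

def AddMonoidHom.prodEquiv (T A B : Type*) [AddZeroClass T] [AddCommMonoid A]
    [AddCommMonoid B] : (T →+ A) × (T →+ B) ≃ (T →+ A × B) where
  toFun f := f.1.prod f.2
  invFun f := ((AddMonoidHom.fst A B).comp f, (AddMonoidHom.snd A B).comp f)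
  left_inv f := by simp
  right_inv := AddMonoidHom.prod_unique

section HomLeftExact

variable {T A B C : Type*} [AddZeroClass T] [AddCommGroup A] [AddCommGroup B] [AddCommGroup C]

theorem AddMonoidHom.compHom_injective {i : B →+ C} (hi : Injective i) :
    Injective (compHom i : (T →+ B) →+ (T →+ C)) :=
  fun _ _ h ↦ AddMonoidHom.ext fun t ↦ hi (DFunLike.congr_fun h t)

theorem AddMonoidHom.ker_compHom_eq_range_compHom {i : B →+ C} {p : C →+ A}
    (hi : Injective i) (hexact : i.range = p.ker) :
    (compHom p : (T →+ C) →+ (T →+ A)).ker = (compHom i).range := by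
  ext g
  constructor
  · intro hg
    have hmem : ∀ t, g t ∈ i.range := fun t ↦ by
      rw [hexact, AddMonoidHom.mem_ker]
      exact DFunLike.congr_fun (AddMonoidHom.mem_ker.mp hg) t
    refine ⟨(AddMonoidHom.ofInjective hi).symm.toAddMonoidHom.comp (g.codRestrict _ hmem), ?_⟩
    ext t
    simp [AddMonoidHom.apply_ofInjective_symm hi ⟨g t, hmem t⟩]
  · rintro ⟨g, rfl⟩
    ext t
    exact AddMonoidHom.mem_ker.mp (hexact ▸ ⟨g t, rfl⟩ : i (g t) ∈ p.ker)

end HomLeftExact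

theorem AddMonoidHom.exists_lift_of_finite_of_addEquiv_prod {A B C : Type*} [AddCommGroup A]
    [AddCommGroup B] [AddCommGroup C] [AddGroup.FG A] [AddGroup.FG B] {i : B →+ C} {p : C →+ A}
    (hi : Injective i) (hexact : i.range = p.ker) (e : C ≃+ A × B)
    (T : Type*) [AddCommGroup T] [Finite T] (f : T →+ A) : ∃ g : T →+ C, p.comp g = f := by
  have := finite_addMonoidHom_of_finite T A
  have := finite_addMonoidHom_of_finite T B
  let homC : (T →+ C) ≃ (T →+ A) × (T →+ B) :=
    e.addMonoidHomCongrRightEquiv.trans (AddMonoidHom.prodEquiv T A B).symm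
  have : Finite (T →+ C) := .of_equiv _ homC.symm
  have hcard : Nat.card (T →+ C) = Nat.card (T →+ A) * Nat.card (T →+ B) := by
    rw [Nat.card_congr homC, Nat.card_prod]
  have hker :
      Nat.card (AddMonoidHom.compHom p : (T →+ C) →+ (T →+ A)).ker = Nat.card (T →+ B) := by
    rw [AddMonoidHom.ker_compHom_eq_range_compHom hi hexact,
      ← Nat.card_congr (AddMonoidHom.ofInjective (AddMonoidHom.compHom_injective hi)).toEquiv]
  rw [← hker] at hcard
  exact (AddMonoidHom.compHom p).surjective_of_card_eq_card_mul_card_ker hcard f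

theorem AddMonoidHom.exists_section_of_forall_finite_lift {A C : Type*} [AddCommGroup A]
    [AddCommGroup C] [AddGroup.FG A] (p : C →+ A) (hp : Surjective p)
    (hlift : ∀ (T : Type) [AddCommGroup T] [Finite T] (f : T →+ A),
      ∃ g : T →+ C, p.comp g = f) :
    ∃ s : A →+ C, p.comp s = AddMonoidHom.id A := by
  obtain ⟨n, ι, _, q, hq, k, ⟨eA⟩⟩ := AddCommGroup.equiv_free_prod_directSum_zmod A
  have : ∀ j, NeZero (q j ^ k j) := fun j ↦ ⟨pow_ne_zero _ (hq j).ne_zero⟩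
  have : Finite (DirectSum ι fun j ↦ ZMod (q j ^ k j)) :=
    .of_equiv _ DFinsupp.equivFunOnFintype.symm
  obtain ⟨sF, hsF⟩ := Module.projective_lifting_property p.toIntLinearMap
    (eA.symm.toAddMonoidHom.comp (AddMonoidHom.inl _ _)).toIntLinearMap hp
  obtain ⟨sD, hsD⟩ := hlift _ (eA.symm.toAddMonoidHom.comp (AddMonoidHom.inr _ _))
  refine ⟨(sF.toAddMonoidHom.coprod sD).comp eA.toAddMonoidHom, ?_⟩
  ext a
  have hF : p (sF (eA a).1) = eA.symm ((eA a).1, 0) := DFunLike.congr_fun hsF (eA a).1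
  have hD : p (sD (eA a).2) = eA.symm (0, (eA a).2) := DFunLike.congr_fun hsD (eA a).2
  calc p (sF (eA a).1 + sD (eA a).2)
      = eA.symm ((eA a).1, 0) + eA.symm (0, (eA a).2) := by rw [map_add, hF, hD]
    _ = a := by rw [← map_add, Prod.mk_add_mk, add_zero, zero_add, AddEquiv.symm_apply_apply]

theorem short_exact_sequence_splits_of_iso_direct_sum_general
    (A B C : Type*) [AddCommGroup A] [AddCommGroup B] [AddCommGroup C]
    [AddGroup.FG A] [AddGroup.FG B]
    (i : B →+ C) (p : C →+ A)
    (hi : Function.Injective i) (hp : Function.Surjective p)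
    (hexact : i.range = p.ker)
    (hiso : Nonempty (C ≃+ A × B)) :
    ∃ s : A →+ C, p.comp s = AddMonoidHom.id A := by
  obtain ⟨e⟩ := hiso
  exact p.exists_section_of_forall_finite_lift hp fun T _ _ ↦
    AddMonoidHom.exists_lift_of_finite_of_addEquiv_prod hi hexact e T

/-- **Splitting of short exact sequences of finitely generated abelian groups.**
Let `0 → B → C → A → 0` be a short exact sequence of finitely generated abelian
groups (i.e. `i : B → C` injective, `p : C → A` surjective, `range i = ker p`).
If `C` is isomorphic to `A ⊕ B` as an abelian group, then the sequence splits: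
there is a homomorphism `s : A → C` with `p ∘ s = id`. -/
theorem short_exact_sequence_splits_of_iso_direct_sum
    (A B C : Type*) [AddCommGroup A] [AddCommGroup B] [AddCommGroup C]
    [AddGroup.FG A] [AddGroup.FG B] [AddGroup.FG C]
    (i : B →+ C) (p : C →+ A)
    (hi : Function.Injective i) (hp : Function.Surjective p)
    (hexact : i.range = p.ker)
    (hiso : Nonempty (C ≃+ A × B)) :
    ∃ s : A →+ C, p.comp s = AddMonoidHom.id A :=
  short_exact_sequence_splits_of_iso_direct_sum_general A B C i p hi hp hexact hiso
end

section
/- Let R be a (possibly noncommutative) ring that is both left-Artinian and left-Noetherian, and let f : R → R be an endomorphism of the additive group of R such that, for every natural number n, both the image f^n(R) of the n-th iterate of f and the kernel ker(f^n) are two-sided ideals of R. Set f^∞R = ⋂_{n≥0} f^n(R) and f^{−∞}0 = ⋃_{n≥0} ker(f^n). Then f^∞R ∩ f^{−∞}0 = 0 and f^∞R + f^{−∞}0 = R; consequently every element of R is uniquely the sum of an element of f^∞R and an element of f^{−∞}0, and x·y = 0 = y·x whenever x ∈ f^∞R and y ∈ f^{−∞}0. -/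
/-!
The images `f^n R` form a descending and the kernels `ker f^n` an ascending chain of left ideals,
so both chains stabilise at some `N`, where `f^∞R = f^N R` and `f^{-∞}0 = ker f^N`. Since
`f^N R = f^{2N} R` and `ker f^N = ker f^{2N}`, Fitting's argument splits `R` as
`f^N R ⊕ ker f^N`, and two two-sided ideals meeting in `0` annihilate each other.
-/

open Pointwise Filter

theorem Antitone.eventually_iInter_eq {α : Type*} {s : ℕ → Set α} (hs : Antitone s)
    (h : ∃ n, ∀ m, n ≤ m → s n = s m) : ∀ᶠ n in atTop, ⋂ m, s m = s n := by
  obtain ⟨n, hn⟩ := h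
  refine eventually_atTop.mpr ⟨n, fun l hl ↦
    (Set.iInter_subset _ _).antisymm (Set.subset_iInter fun m ↦ ?_)⟩
  rcases le_total l m with hlm | hml
  · rw [← hn _ (hl.trans hlm), hn _ hl]
  · exact hs hml

theorem Monotone.eventually_iUnion_eq {α : Type*} {s : ℕ → Set α} (hs : Monotone s)
    (h : ∃ n, ∀ m, n ≤ m → s n = s m) : ∀ᶠ n in atTop, ⋃ m, s m = s n := by
  obtain ⟨n, hn⟩ := h
  refine eventually_atTop.mpr ⟨n, fun l hl ↦
    (Set.iUnion_subset fun m ↦ ?_).antisymm (Set.subset_iUnion _ _)⟩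
  rcases le_total l m with hlm | hml
  · rw [← hn _ (hl.trans hlm), hn _ hl]
  · exact hs hml

section ChainConditions

variable {R M : Type*} [Semiring R] [AddCommMonoid M] [Module R M]

theorem IsArtinian.eventually_iInter_eq_of_antitone [IsArtinian R M] {s : ℕ → Set M}
    (hs : Antitone s) (hsub : ∀ n, ∃ N : Submodule R M, (N : Set M) = s n) :
    ∀ᶠ n in atTop, ⋂ m, s m = s n := by
  choose N hN using hsub
  have hN_anti : Antitone N := fun a b hab ↦ by
    rw [← SetLike.coe_subset_coe, hN, hN]
    exact hs hab
  obtain ⟨n, hn⟩ := IsArtinian.monotone_stabilizes (⟨N, hN_anti⟩ : ℕ →o (Submodule R M)ᵒᵈ)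
  exact hs.eventually_iInter_eq ⟨n, fun m hm ↦ by rw [← hN, ← hN]; exact congrArg SetLike.coe (hn m hm)⟩

theorem IsNoetherian.eventually_iUnion_eq_of_monotone [IsNoetherian R M] {s : ℕ → Set M}
    (hs : Monotone s) (hsub : ∀ n, ∃ N : Submodule R M, (N : Set M) = s n) :
    ∀ᶠ n in atTop, ⋃ m, s m = s n := by
  choose N hN using hsub
  have hN_mono : Monotone N := fun a b hab ↦ by
    rw [← SetLike.coe_subset_coe, hN, hN]
    exact hs hab
  obtain ⟨n, hn⟩ := monotone_stabilizes_iff_noetherian.mpr inferInstance ⟨N, hN_mono⟩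
  exact hs.eventually_iUnion_eq ⟨n, fun m hm ↦ by rw [← hN, ← hN]; exact congrArg SetLike.coe (hn m hm)⟩

end ChainConditions

theorem Function.antitone_range_iterate {α : Type*} (f : α → α) :
    Antitone fun n ↦ Set.range f^[n] := by
  intro m n hmn
  obtain ⟨k, rfl⟩ := Nat.exists_eq_add_of_le hmn
  rintro _ ⟨y, rfl⟩
  exact ⟨f^[k] y, (Function.iterate_add_apply f m k y).symm⟩

namespace AddMonoidHom

theorem monotone_ker_iterate {M : Type*} [AddMonoid M] (f : M →+ M) :
    Monotone fun n ↦ {x | f^[n] x = 0} := by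
  intro m n hmn x (hx : f^[m] x = 0)
  obtain ⟨k, rfl⟩ := Nat.exists_eq_add_of_le hmn
  change f^[m + k] x = 0
  rw [add_comm, Function.iterate_add_apply, hx, iterate_map_zero]

theorem range_iterate_inter_ker_iterate_eq_zero {M : Type*} [AddMonoid M] (f : M →+ M) {n : ℕ}
    (h : {x | f^[n + n] x = 0} ⊆ {x | f^[n] x = 0}) :
    Set.range f^[n] ∩ {x | f^[n] x = 0} = {0} := by
  refine Set.eq_singleton_iff_unique_mem.mpr
    ⟨⟨⟨0, iterate_map_zero f n⟩, iterate_map_zero f n⟩, ?_⟩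
  rintro _ ⟨⟨y, rfl⟩, hy⟩
  exact h (show f^[n + n] y = 0 by rwa [Function.iterate_add_apply])

theorem range_iterate_add_ker_iterate_eq_univ {M : Type*} [AddGroup M] (f : M →+ M) {n : ℕ}
    (h : Set.range f^[n] ⊆ Set.range f^[n + n]) :
    Set.range f^[n] + {x | f^[n] x = 0} = Set.univ := by
  refine Set.eq_univ_of_forall fun x ↦ ?_
  obtain ⟨y, hy⟩ := h ⟨x, rfl⟩
  refine ⟨f^[n] y, ⟨y, rfl⟩, -f^[n] y + x, ?_, add_neg_cancel_left _ _⟩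
  change f^[n] (-f^[n] y + x) = 0
  rw [iterate_map_add, iterate_map_neg, ← Function.iterate_add_apply, hy, neg_add_cancel]

end AddMonoidHom

theorem existsUnique_add_of_inter_eq_zero {M S : Type*} [AddGroup M] [SetLike S M]
    [AddSubgroupClass S M] {A B : S} (hinf : (A : Set M) ∩ (B : Set M) = {0})
    (hsup : (A : Set M) + (B : Set M) = Set.univ) (x : M) :
    ∃! q : M × M, q.1 ∈ A ∧ q.2 ∈ B ∧ x = q.1 + q.2 := by
  obtain ⟨a, ha, b, hb, rfl⟩ := hsup ▸ Set.mem_univ x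
  refine ⟨(a, b), ⟨ha, hb, rfl⟩, ?_⟩
  rintro ⟨a', b'⟩ ⟨ha' : a' ∈ A, hb' : b' ∈ B, h : a + b = a' + b'⟩
  have hdiff : -a' + a = b' - b := by
    rw [eq_sub_iff_add_eq, add_assoc, h, neg_add_cancel_left]
  have hzero : -a' + a = 0 := by
    rw [← Set.mem_singleton_iff, ← hinf]
    exact ⟨add_mem (neg_mem ha') ha, hdiff ▸ sub_mem hb' hb⟩
  have hb'b : b' - b = 0 := hdiff ▸ hzero
  exact Prod.ext (neg_add_eq_zero.mp hzero) (sub_eq_zero.mp hb'b)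

theorem TwoSidedIdeal.mul_eq_zero_of_inter_eq_zero {R : Type*} [NonUnitalNonAssocRing R]
    {I J : TwoSidedIdeal R} (h : (I : Set R) ∩ J = {0}) {x y : R} (hx : x ∈ I) (hy : y ∈ J) :
    x * y = 0 ∧ y * x = 0 := by
  simp only [← Set.mem_singleton_iff, ← h]
  exact ⟨⟨I.mul_mem_right _ _ hx, J.mul_mem_left _ _ hy⟩,
    ⟨I.mul_mem_left _ _ hx, J.mul_mem_right _ _ hy⟩⟩

/-- **Fitting decomposition for rings** (Lemma A.1 of the paper).
Let `R` be a ring that is both left-Artinian and left-Noetherian, and let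
`f : R → R` be an endomorphism of its additive group such that for every `n`
both the image of `f^n` and the kernel of `f^n` are two-sided ideals of `R`.
Writing `f^∞R = ⋂ₙ f^n(R)` and `f^{-∞}0 = ⋃ₙ ker(f^n)`, we have
`f^∞R ∩ f^{-∞}0 = {0}` and `f^∞R + f^{-∞}0 = R`; consequently every element of
`R` is uniquely a sum of an element of `f^∞R` and an element of `f^{-∞}0`, and
`x·y = 0 = y·x` whenever `x ∈ f^∞R`, `y ∈ f^{-∞}0`. -/
theorem ring_fitting_decomposition (R : Type*) [Ring R]
    [IsArtinianRing R] [IsNoetherianRing R] (f : R →+ R)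
    (hrange : ∀ n : ℕ, ∃ I : TwoSidedIdeal R, (I : Set R) = Set.range (⇑f)^[n])
    (hker : ∀ n : ℕ, ∃ I : TwoSidedIdeal R, (I : Set R) = {x : R | (⇑f)^[n] x = 0}) :
    ((⋂ n : ℕ, Set.range (⇑f)^[n]) ∩ (⋃ n : ℕ, {x : R | (⇑f)^[n] x = 0}) = {0}) ∧
    ((⋂ n : ℕ, Set.range (⇑f)^[n]) + (⋃ n : ℕ, {x : R | (⇑f)^[n] x = 0}) = Set.univ) ∧
    (∀ x : R, ∃! q : R × R,
        q.1 ∈ (⋂ n : ℕ, Set.range (⇑f)^[n]) ∧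
        q.2 ∈ (⋃ n : ℕ, {x : R | (⇑f)^[n] x = 0}) ∧ x = q.1 + q.2) ∧
    (∀ x y : R, x ∈ (⋂ n : ℕ, Set.range (⇑f)^[n]) →
        y ∈ (⋃ n : ℕ, {x : R | (⇑f)^[n] x = 0}) → x * y = 0 ∧ y * x = 0) := by
  choose I hI using hrange
  choose K hK using hker
  have hranges := IsArtinian.eventually_iInter_eq_of_antitone (R := R)
    (Function.antitone_range_iterate f) fun n ↦ ⟨(I n).asIdeal, hI n⟩
  have hkers := IsNoetherian.eventually_iUnion_eq_of_monotone (R := R)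
    f.monotone_ker_iterate fun n ↦ ⟨(K n).asIdeal, hK n⟩
  obtain ⟨N, hN_range, hN_ker⟩ := (hranges.and hkers).exists
  have hcap := f.range_iterate_inter_ker_iterate_eq_zero (n := N)
    (hN_ker ▸ Set.subset_iUnion (fun m ↦ {x | f^[m] x = 0}) (N + N))
  have hsum := f.range_iterate_add_ker_iterate_eq_univ (n := N)
    (hN_range ▸ Set.iInter_subset (fun m ↦ Set.range f^[m]) (N + N))
  rw [← hI N, ← hK N] at hcap hsum
  rw [hN_range, hN_ker, ← hI N, ← hK N]
  exact ⟨hcap, hsum, existsUnique_add_of_inter_eq_zero hcap hsum,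
    fun x y hx hy ↦ TwoSidedIdeal.mul_eq_zero_of_inter_eq_zero hcap hx hy⟩
end

section
/- Let k be a field, let n and m be natural numbers, and let R_1, …, R_n and Q_1, …, Q_m be families of nonzero finite-dimensional non-unital associative k-algebras, each of which is indecomposable. If the product algebras R_1 × R_2 × ⋯ × R_n and Q_1 × Q_2 × ⋯ × Q_m are isomorphic as non-unital k-algebras, then n = m and there exists a bijection σ : {1,…,n} → {1,…,m} such that R_i is isomorphic to Q_{σ(i)} as a non-unital k-algebra for every i. -/
universe u

/-- A bundled nonzero-or-not non-unital (associative) `k`-algebra: a `k`-vector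
space with an associative `k`-bilinear multiplication (no unit required). -/
structure NuAlgebra (k : Type u) [CommRing k] : Type (u + 1) where
  carrier : Type u
  [instNonUnitalRing : NonUnitalRing carrier]
  [instModule : Module k carrier]
  [instSMulCommClass : SMulCommClass k carrier carrier]
  [instIsScalarTower : IsScalarTower k carrier carrier]

attribute [instance] NuAlgebra.instNonUnitalRing NuAlgebra.instModule
  NuAlgebra.instSMulCommClass NuAlgebra.instIsScalarTower

/-- Two non-unital `k`-algebras are isomorphic if there is a multiplicative
`k`-linear equivalence between them. -/
def NuAlgIso (k : Type u) [CommRing k] (A B : Type u)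
    [NonUnitalRing A] [Module k A] [NonUnitalRing B] [Module k B] : Prop :=
  ∃ e : A ≃ₗ[k] B, ∀ x y : A, e (x * y) = e x * e y

/-- A non-unital `k`-algebra is decomposable if it is isomorphic, as a non-unital
`k`-algebra, to a product (with componentwise operations) of two nonzero
non-unital `k`-algebras. -/
def IsDecomposableAlg (k : Type u) [CommRing k] (A : Type u)
    [NonUnitalRing A] [Module k A] : Prop :=
  ∃ B C : NuAlgebra k, Nontrivial B.carrier ∧ Nontrivial C.carrier ∧
    NuAlgIso k A (B.carrier × C.carrier)

/-!
The linear centroid of a finite-dimensional indecomposable algebra `A` (the `k`-linear maps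
commuting with left and right multiplications) is a local ring: an element with complementary
kernel and image would split `A` into a product of two ideals, so by Fitting's lemma every
element is invertible or nilpotent. Given `A × B ≅ ∏ⱼ Qⱼ`, the maps `A → Qⱼ → A` lie in the
centroid of `A` and sum to the identity, so one of them, `β ∘ α` with `α : A → Qⱼ` and
`β : Qⱼ → A`, is invertible, say with inverse `v`. Then `α ∘ v ∘ β` is a nonzero idempotent of
the centroid of `Qⱼ`, hence the identity, which makes `β` an isomorphism. The complement `B` is
then isomorphic to the product of the remaining `Qⱼ`, and we conclude by induction on the number
of factors.
-/

section NuAlgIso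

variable {k : Type u} [CommRing k] {A B C : Type u} [NonUnitalRing A] [Module k A]
  [NonUnitalRing B] [Module k B] [NonUnitalRing C] [Module k C]

theorem NuAlgIso.symm (h : NuAlgIso k A B) : NuAlgIso k B A := by
  obtain ⟨e, he⟩ := h
  exact ⟨e.symm, fun x y => e.injective (by simp [he])⟩

theorem NuAlgIso.trans (h : NuAlgIso k A B) (h' : NuAlgIso k B C) : NuAlgIso k A C := by
  obtain ⟨e, he⟩ := h
  obtain ⟨e', he'⟩ := h'
  exact ⟨e.trans e', fun x y => by simp [he, he']⟩

theorem nuAlgIso_of_bijective (f : A →ₗ[k] B) (hf : Function.Bijective f)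
    (hmul : ∀ x y, f (x * y) = f x * f y) : NuAlgIso k A B :=
  ⟨LinearEquiv.ofBijective f hf, hmul⟩

theorem isEmpty_of_nuAlgIso_pi {ι κ : Type} [IsEmpty ι] {R : ι → Type u} {Q : κ → Type u}
    [∀ i, NonUnitalRing (R i)] [∀ i, Module k (R i)] [∀ j, NonUnitalRing (Q j)]
    [∀ j, Module k (Q j)] [∀ j, Nontrivial (Q j)] (h : NuAlgIso k (∀ i, R i) (∀ j, Q j)) :
    IsEmpty κ := by
  refine ⟨fun j => ?_⟩
  have := Pi.nontrivial_at (f := Q) j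
  obtain ⟨e, -⟩ := h
  exact not_nontrivial _ e.toEquiv.nontrivial

end NuAlgIso

def LinearEquiv.piSplitAt (R : Type*) [Semiring R] {ι : Type*} [DecidableEq ι] (i : ι)
    (M : ι → Type*) [∀ i, AddCommMonoid (M i)] [∀ i, Module R (M i)] :
    (∀ j, M j) ≃ₗ[R] M i × ∀ j : {j // j ≠ i}, M j :=
  { Equiv.piSplitAt i M with map_add' := fun _ _ => rfl, map_smul' := fun _ _ => rfl }

theorem LinearEquiv.piSplitAt_symm_apply_inl {R : Type*} [Semiring R] {ι : Type*}
    [DecidableEq ι] (i : ι) {M : ι → Type*} [∀ i, AddCommMonoid (M i)] [∀ i, Module R (M i)]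
    (x : M i) : (LinearEquiv.piSplitAt R i M).symm (x, 0) = Pi.single i x := by
  funext j
  by_cases h : j = i
  · subst h; simp [LinearEquiv.piSplitAt]
  · simp [LinearEquiv.piSplitAt, h]

theorem nuAlgIso_pi_prod_pi_ne {k : Type u} [CommRing k] {ι : Type} (R : ι → Type u)
    [∀ i, NonUnitalRing (R i)] [∀ i, Module k (R i)] (i₀ : ι) :
    NuAlgIso k (∀ i, R i) (R i₀ × ∀ i : {i // i ≠ i₀}, R i) := by
  classical
  exact ⟨LinearEquiv.piSplitAt k i₀ R, fun _ _ => rfl⟩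

theorem LinearEquiv.bijective_snd_comp_inr {R A B C D : Type*} [Semiring R] [AddCommGroup A]
    [Module R A] [AddCommGroup B] [Module R B] [AddCommGroup C] [Module R C] [AddCommGroup D]
    [Module R D] (e : (A × B) ≃ₗ[R] C × D)
    (h : Function.Bijective (LinearMap.fst R A B ∘ₗ e.symm.toLinearMap ∘ₗ LinearMap.inl R C D)) :
    Function.Bijective (LinearMap.snd R C D ∘ₗ e.toLinearMap ∘ₗ LinearMap.inr R A B) := by
  refine ⟨(injective_iff_map_eq_zero _).mpr fun b hb => ?_, fun d => ?_⟩
  · have he : e (0, b) = ((e (0, b)).1, 0) := Prod.ext rfl hb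
    have hc : (e (0, b)).1 = 0 := (injective_iff_map_eq_zero _).mp h.1 _ <| by
      simp [← he]
    have h0 : ((0 : A), b) = 0 := e.map_eq_zero_iff.mp (by rw [he, hc]; rfl)
    exact congrArg Prod.snd h0
  · -- choose `c` so that `e.symm (c, d)` has no `A`-component
    obtain ⟨c, hc⟩ := h.2 (-(e.symm (0, d)).1)
    have hx : e.symm (c, d) = (0, (e.symm (c, d)).2) := by
      refine Prod.ext ?_ rfl
      rw [← add_zero c, ← zero_add d, ← Prod.mk_add_mk, map_add]
      simpa using congrArg (· + (e.symm (0, d)).1) hc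
    exact ⟨(e.symm (c, d)).2, by simp [← hx]⟩

theorem Submodule.nontrivial_toNonUnitalSubalgebra {R M : Type*} [CommSemiring R]
    [NonUnitalNonAssocSemiring M] [Module R M] {p : Submodule R M} (hp : p ≠ ⊥) (hmul) :
    Nontrivial (p.toNonUnitalSubalgebra hmul) := by
  obtain ⟨x, hx, hx₀⟩ := Submodule.exists_mem_ne_zero_of_ne_bot hp
  exact nontrivial_of_ne ⟨x, hx⟩ 0 (by simpa [Subtype.ext_iff] using hx₀)

section Centroid

variable (k : Type u) [CommRing k] (A : Type u) [NonUnitalRing A] [Module k A]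
  [SMulCommClass k A A] [IsScalarTower k A A]

def linearCentroid : Subalgebra k (Module.End k A) where
  carrier := {f | ∀ a b, f (a * b) = a * f b ∧ f (a * b) = f a * b}
  mul_mem' {f g} hf hg a b := by
    simp only [Module.End.mul_apply]
    exact ⟨by rw [(hg a b).1, (hf a _).1], by rw [(hg a b).2, (hf _ b).2]⟩
  add_mem' {f g} hf hg a b := by
    simp only [LinearMap.add_apply]
    exact ⟨by rw [(hf a b).1, (hg a b).1, mul_add], by rw [(hf a b).2, (hg a b).2, add_mul]⟩
  algebraMap_mem' c a b := by
    simp only [Module.algebraMap_end_apply, mul_smul_comm, smul_mul_assoc, and_self]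

variable {k A}

theorem isUnit_linearCentroid_of_bijective (f : linearCentroid k A)
    (hf : Function.Bijective (f : Module.End k A)) : IsUnit f := by
  let g := LinearEquiv.ofBijective (f : Module.End k A) hf
  have hfg (x : A) : (f : Module.End k A) (g.symm x) = x := g.apply_symm_apply x
  have hg : (g.symm : Module.End k A) ∈ linearCentroid k A := fun a b =>
    ⟨hf.1 (by simp only [LinearEquiv.coe_coe, hfg, (f.2 _ _).1]),
      hf.1 (by simp only [LinearEquiv.coe_coe, hfg, (f.2 _ _).2])⟩
  exact ⟨⟨f, ⟨_, hg⟩, Subtype.ext (LinearMap.ext hfg),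
    Subtype.ext (LinearMap.ext g.symm_apply_apply)⟩, rfl⟩

theorem isDecomposableAlg_of_isCompl {p q : Submodule k A} (hpq : IsCompl p q)
    (hp : ∀ a x, x ∈ p → a * x ∈ p ∧ x * a ∈ p) (hq : ∀ a x, x ∈ q → a * x ∈ q ∧ x * a ∈ q)
    (hp₀ : p ≠ ⊥) (hq₀ : q ≠ ⊥) : IsDecomposableAlg k A := by
  have hpq_mul {x y : A} (hx : x ∈ p) (hy : y ∈ q) : x * y = 0 :=
    Submodule.disjoint_def.mp hpq.disjoint _ (hp y x hx).2 (hq x y hy).1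
  have hqp_mul {x y : A} (hx : x ∈ q) (hy : y ∈ p) : x * y = 0 :=
    Submodule.disjoint_def.mp hpq.disjoint _ (hp x y hy).1 (hq y x hx).2
  let P := p.toNonUnitalSubalgebra fun x y _ hy => (hp x y hy).1
  let Q := q.toNonUnitalSubalgebra fun x y _ hy => (hq x y hy).1
  refine ⟨⟨P⟩, ⟨Q⟩, Submodule.nontrivial_toNonUnitalSubalgebra hp₀ _,
    Submodule.nontrivial_toNonUnitalSubalgebra hq₀ _, NuAlgIso.symm ?_⟩
  refine ⟨(Submodule.prodEquivOfIsCompl p q hpq : (p × q) ≃ₗ[k] A), fun x y => ?_⟩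
  change (x.1 * y.1 : A) + x.2 * y.2 = (x.1 + x.2) * (y.1 + y.2)
  rw [add_mul, mul_add, mul_add, hpq_mul x.1.2 y.2.2, hqp_mul x.2.2 y.1.2, add_zero, zero_add]

theorem ker_eq_bot_or_range_eq_bot_of_mem_linearCentroid (hA : ¬ IsDecomposableAlg k A)
    {f : Module.End k A} (hf : f ∈ linearCentroid k A)
    (hc : IsCompl (LinearMap.ker f) (LinearMap.range f)) :
    LinearMap.ker f = ⊥ ∨ LinearMap.range f = ⊥ := by
  by_contra! h
  refine hA (isDecomposableAlg_of_isCompl hc (fun a x hx => ?_) (fun a x hx => ?_) h.1 h.2)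
  · simp only [LinearMap.mem_ker] at hx ⊢
    rw [(hf a x).1, (hf x a).2, hx, mul_zero, zero_mul]
    exact ⟨rfl, rfl⟩
  · obtain ⟨y, rfl⟩ := hx
    exact ⟨⟨a * y, (hf a y).1⟩, ⟨y * a, (hf y a).2⟩⟩

theorem IsIdempotentElem.eq_zero_or_eq_one_of_mem_linearCentroid (hA : ¬ IsDecomposableAlg k A)
    {f : Module.End k A} (hf : f ∈ linearCentroid k A) (he : IsIdempotentElem f) :
    f = 0 ∨ f = 1 := by
  rcases ker_eq_bot_or_range_eq_bot_of_mem_linearCentroid hA hf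
    (LinearMap.IsIdempotentElem.isCompl he).symm with h | h
  · exact .inr (LinearMap.ext fun x => LinearMap.ker_eq_bot.mp h (DFunLike.congr_fun he x))
  · exact .inl (LinearMap.range_eq_bot.mp h)

end Centroid

section Fitting

variable {k : Type u} [Field k] {A : Type u} [NonUnitalRing A] [Module k A]
  [SMulCommClass k A A] [IsScalarTower k A A] [FiniteDimensional k A]

theorem isUnit_or_isNilpotent_of_linearCentroid (hA : ¬ IsDecomposableAlg k A)
    (f : linearCentroid k A) : IsUnit f ∨ IsNilpotent f := by
  obtain ⟨n, hn, hn₀⟩ := ((f : Module.End k A).eventually_isCompl_ker_pow_range_pow.and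
    (Filter.eventually_ne_atTop 0)).exists
  rcases ker_eq_bot_or_range_eq_bot_of_mem_linearCentroid hA (f ^ n).2 hn with h | h
  · have hinj : Function.Injective ((f ^ n : linearCentroid k A) : Module.End k A) :=
      LinearMap.ker_eq_bot.mp h
    exact .inl ((isUnit_pow_iff hn₀).mp (isUnit_linearCentroid_of_bijective _
      ⟨hinj, LinearMap.injective_iff_surjective.mp hinj⟩))
  · exact .inr ⟨n, Subtype.ext (LinearMap.range_eq_bot.mp h)⟩

theorem isLocalRing_linearCentroid [Nontrivial A] (hA : ¬ IsDecomposableAlg k A) :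
    IsLocalRing (linearCentroid k A) :=
  .of_isUnit_or_isUnit_one_sub_self fun f =>
    (isUnit_or_isNilpotent_of_linearCentroid hA f).imp_right IsNilpotent.isUnit_one_sub

end Fitting

/-- `ι` and `π` exhibit `A` as a direct factor of `M`, i.e. `M ≅ A × ker π` with `ι` and `π`
the inclusion of and the projection onto the first factor. -/
structure IsDirectFactor {k A M : Type*} [CommRing k] [NonUnitalRing A] [Module k A]
    [NonUnitalRing M] [Module k M] (ι : A →ₗ[k] M) (π : M →ₗ[k] A) : Prop where
  proj_incl : ∀ a, π (ι a) = a
  map_mul_proj : ∀ x y, π (x * y) = π x * π y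
  mul_incl : ∀ x a, x * ι a = ι (π x * a)
  incl_mul : ∀ a x, ι a * x = ι (a * π x)

namespace IsDirectFactor

section Basic

variable {k A B C M N : Type*} [CommRing k] [NonUnitalRing A] [Module k A] [NonUnitalRing B]
  [Module k B] [NonUnitalRing C] [Module k C] [NonUnitalRing M] [Module k M] [NonUnitalRing N]
  [Module k N] {ι : A →ₗ[k] M} {π : M →ₗ[k] A}

theorem map_mul_incl (h : IsDirectFactor ι π) (a b : A) : ι (a * b) = ι a * ι b := by
  rw [h.incl_mul, h.proj_incl]

theorem map_mul_proj_comp_incl {ι' : C →ₗ[k] M} {π' : M →ₗ[k] C} (h : IsDirectFactor ι π)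
    (h' : IsDirectFactor ι' π') (c c' : C) :
    (π ∘ₗ ι') (c * c') = (π ∘ₗ ι') c * (π ∘ₗ ι') c' := by
  simp only [LinearMap.comp_apply, h'.map_mul_incl, h.map_mul_proj]

theorem inl : IsDirectFactor (LinearMap.inl k A B) (LinearMap.fst k A B) where
  proj_incl _ := rfl
  map_mul_proj _ _ := rfl
  mul_incl _ _ := Prod.ext rfl (mul_zero _)
  incl_mul _ _ := Prod.ext rfl (zero_mul _)

theorem inr : IsDirectFactor (LinearMap.inr k A B) (LinearMap.snd k A B) where
  proj_incl _ := rfl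
  map_mul_proj _ _ := rfl
  mul_incl _ _ := Prod.ext (mul_zero _) rfl
  incl_mul _ _ := Prod.ext (zero_mul _) rfl

theorem single {κ : Type*} [DecidableEq κ] {Q : κ → Type*} [∀ j, NonUnitalRing (Q j)]
    [∀ j, Module k (Q j)] (j : κ) :
    IsDirectFactor (LinearMap.single k Q j) (LinearMap.proj j) where
  proj_incl _ := Pi.single_eq_same _ _
  map_mul_proj _ _ := rfl
  mul_incl _ _ := (Pi.single_mul_right _).symm
  incl_mul _ _ := (Pi.single_mul_left _).symm

theorem comp_equiv (h : IsDirectFactor ι π) (e : M ≃ₗ[k] N) (he : ∀ x y, e (x * y) = e x * e y) :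
    IsDirectFactor (e.toLinearMap ∘ₗ ι) (π ∘ₗ e.symm.toLinearMap) := by
  have he' (x y : N) : e.symm (x * y) = e.symm x * e.symm y :=
    e.injective (by rw [he, e.apply_symm_apply, e.apply_symm_apply, e.apply_symm_apply])
  refine ⟨fun a => ?_, fun x y => ?_, fun x a => ?_, fun a x => ?_⟩ <;>
    simp only [LinearMap.comp_apply, LinearEquiv.coe_coe, LinearEquiv.symm_apply_apply]
  · exact h.proj_incl a
  · rw [he', h.map_mul_proj]
  · rw [← h.mul_incl, he, e.apply_symm_apply]
  · rw [← h.incl_mul, he, e.apply_symm_apply]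

end Basic

section Centroid

variable {k : Type u} [CommRing k] {A C : Type u} {M : Type*} [NonUnitalRing A] [Module k A]
  [SMulCommClass k A A] [IsScalarTower k A A] [NonUnitalRing C] [Module k C]
  [SMulCommClass k C C] [IsScalarTower k C C] [NonUnitalRing M] [Module k M]
  {ι₁ : A →ₗ[k] M} {π₁ : M →ₗ[k] A} {ι₂ : C →ₗ[k] M} {π₂ : M →ₗ[k] C}

theorem comp_mem_linearCentroid (h₁ : IsDirectFactor ι₁ π₁) (h₂ : IsDirectFactor ι₂ π₂)
    {v : Module.End k A} (hv : v ∈ linearCentroid k A) :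
    π₂ ∘ₗ ι₁ ∘ₗ v ∘ₗ π₁ ∘ₗ ι₂ ∈ linearCentroid k C := fun c c' => by
  simp only [LinearMap.comp_apply, h₂.map_mul_incl, h₁.map_mul_proj]
  constructor
  · rw [(hv _ _).1, ← h₁.mul_incl, h₂.map_mul_proj, h₂.proj_incl]
  · rw [(hv _ _).2, ← h₁.incl_mul, h₂.map_mul_proj, h₂.proj_incl]

theorem bijective_proj_comp_incl [Nontrivial A] (h₁ : IsDirectFactor ι₁ π₁)
    (h₂ : IsDirectFactor ι₂ π₂) (hC : ¬ IsDecomposableAlg k C) {v : Module.End k A}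
    (hv : v ∈ linearCentroid k A) (hinv : ∀ a, π₁ (ι₂ (π₂ (ι₁ (v a)))) = a) :
    Function.Bijective (π₁ ∘ₗ ι₂) := by
  set w := π₂ ∘ₗ ι₁ ∘ₗ v ∘ₗ π₁ ∘ₗ ι₂
  have hw_idem : IsIdempotentElem w := LinearMap.ext fun c => by
    simp only [w, Module.End.mul_apply, LinearMap.comp_apply, hinv]
  have hw_ne : w ≠ 0 := by
    obtain ⟨a, ha⟩ := exists_ne (0 : A)
    intro hw
    have hwa : w (π₂ (ι₁ (v a))) = π₂ (ι₁ (v a)) := by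
      simp only [w, LinearMap.comp_apply, hinv]
    rw [hw, LinearMap.zero_apply] at hwa
    exact ha (by rw [← hinv a, ← hwa, map_zero, map_zero])
  have hw : ∀ c, π₂ (ι₁ (v (π₁ (ι₂ c)))) = c := fun c => LinearMap.congr_fun
    ((hw_idem.eq_zero_or_eq_one_of_mem_linearCentroid hC
      (h₁.comp_mem_linearCentroid h₂ hv)).resolve_left hw_ne) c
  exact ⟨Function.LeftInverse.injective (g := π₂ ∘ₗ ι₁ ∘ₗ v) hw, fun a => ⟨_, hinv a⟩⟩

end Centroid

theorem exists_bijective_proj_comp_single {k : Type u} [Field k] {A : Type u} [NonUnitalRing A]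
    [Module k A] [SMulCommClass k A A] [IsScalarTower k A A] [FiniteDimensional k A]
    [Nontrivial A] {κ : Type*} [Fintype κ] [DecidableEq κ] {Q : κ → Type u}
    [∀ j, NonUnitalRing (Q j)] [∀ j, Module k (Q j)] [∀ j, SMulCommClass k (Q j) (Q j)]
    [∀ j, IsScalarTower k (Q j) (Q j)] (hA : ¬ IsDecomposableAlg k A)
    (hQ : ∀ j, ¬ IsDecomposableAlg k (Q j)) {ι : A →ₗ[k] ∀ j, Q j} {π : (∀ j, Q j) →ₗ[k] A}
    (h : IsDirectFactor ι π) : ∃ j, Function.Bijective (π ∘ₗ LinearMap.single k Q j) := by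
  have := isLocalRing_linearCentroid hA
  let f (j : κ) : linearCentroid k A :=
    ⟨π ∘ₗ LinearMap.single k Q j ∘ₗ 1 ∘ₗ LinearMap.proj j ∘ₗ ι,
      (single j).comp_mem_linearCentroid h (one_mem _)⟩
  have hsum : ∑ j, f j = 1 := Subtype.ext <| LinearMap.ext fun a => by
    simp [f, ← map_sum, Finset.univ_sum_single, h.proj_incl]
  obtain ⟨j, -, hj⟩ := IsLocalRing.exists_of_isUnit_sum (hsum ▸ isUnit_one)
  refine ⟨j, h.bijective_proj_comp_incl (single j) (hQ j)
    (↑hj.unit⁻¹ : linearCentroid k A).2 fun a => ?_⟩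
  exact LinearMap.congr_fun (congrArg Subtype.val hj.mul_val_inv) a

end IsDirectFactor

theorem nuAlgIso_and_nuAlgIso_of_bijective {k A B C D : Type u} [CommRing k] [NonUnitalRing A]
    [Module k A] [NonUnitalRing B] [Module k B] [NonUnitalRing C] [Module k C]
    [NonUnitalRing D] [Module k D] (e : (A × B) ≃ₗ[k] C × D) (he : ∀ x y, e (x * y) = e x * e y)
    (h : Function.Bijective (LinearMap.fst k A B ∘ₗ e.symm.toLinearMap ∘ₗ LinearMap.inl k C D)) :
    NuAlgIso k A C ∧ NuAlgIso k B D :=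
  ⟨(nuAlgIso_of_bijective _ h
      ((IsDirectFactor.inl.comp_equiv e he).map_mul_proj_comp_incl .inl)).symm,
    nuAlgIso_of_bijective _ (e.bijective_snd_comp_inr h)
      (IsDirectFactor.inr.map_mul_proj_comp_incl (IsDirectFactor.inr.comp_equiv e he))⟩

section KrullSchmidt

variable {k : Type u} [Field k]

theorem exists_nuAlgIso_of_nuAlgIso_prod_pi {A B : Type u} [NonUnitalRing A] [Module k A]
    [SMulCommClass k A A] [IsScalarTower k A A] [FiniteDimensional k A] [Nontrivial A]
    [NonUnitalRing B] [Module k B] {κ : Type} [Finite κ] {Q : κ → Type u}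
    [∀ j, NonUnitalRing (Q j)] [∀ j, Module k (Q j)] [∀ j, SMulCommClass k (Q j) (Q j)]
    [∀ j, IsScalarTower k (Q j) (Q j)] (hA : ¬ IsDecomposableAlg k A)
    (hQ : ∀ j, ¬ IsDecomposableAlg k (Q j)) (h : NuAlgIso k (A × B) (∀ j, Q j)) :
    ∃ j, NuAlgIso k A (Q j) ∧ NuAlgIso k B (∀ j' : {j' // j' ≠ j}, Q j') := by
  classical
  have := Fintype.ofFinite κ
  obtain ⟨e, he⟩ := h
  obtain ⟨j, hj⟩ := (IsDirectFactor.inl.comp_equiv e he).exists_bijective_proj_comp_single hA hQ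
  let e' := e.trans (LinearEquiv.piSplitAt k j Q)
  refine ⟨j, nuAlgIso_and_nuAlgIso_of_bijective e' (fun x y => ?_) ?_⟩
  · simp only [e', LinearEquiv.trans_apply, he]
    rfl
  · convert hj using 1
    ext q
    simp [e', LinearEquiv.piSplitAt_symm_apply_inl]

theorem krull_schmidt_pi {ι κ : Type} [Finite ι] [Finite κ] {R : ι → Type u} {Q : κ → Type u}
    [∀ i, NonUnitalRing (R i)] [∀ i, Module k (R i)]
    [∀ i, SMulCommClass k (R i) (R i)] [∀ i, IsScalarTower k (R i) (R i)]
    [∀ j, NonUnitalRing (Q j)] [∀ j, Module k (Q j)]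
    [∀ j, SMulCommClass k (Q j) (Q j)] [∀ j, IsScalarTower k (Q j) (Q j)]
    [∀ i, Nontrivial (R i)] [∀ j, Nontrivial (Q j)] [∀ i, FiniteDimensional k (R i)]
    (hR : ∀ i, ¬ IsDecomposableAlg k (R i)) (hQ : ∀ j, ¬ IsDecomposableAlg k (Q j))
    (h : NuAlgIso k (∀ i, R i) (∀ j, Q j)) :
    ∃ σ : ι ≃ κ, ∀ i, NuAlgIso k (R i) (Q (σ i)) := by
  classical
  induction hn : Nat.card ι generalizing ι κ with
  | zero =>
    have : IsEmpty ι := Finite.card_eq_zero_iff.mp hn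
    have := isEmpty_of_nuAlgIso_pi h
    exact ⟨Equiv.equivOfIsEmpty ι κ, isEmptyElim⟩
  | succ n ih =>
    obtain ⟨i₀⟩ : Nonempty ι := Finite.card_pos_iff.mp (by omega)
    obtain ⟨j₀, hi₀, hrest⟩ := exists_nuAlgIso_of_nuAlgIso_prod_pi (hR i₀) hQ
      ((nuAlgIso_pi_prod_pi_ne R i₀).symm.trans h)
    have hcard : Nat.card {i // i ≠ i₀} = n := by
      have := Nat.card_congr (Equiv.optionSubtypeNe i₀)
      rw [Finite.card_option] at this
      omega
    obtain ⟨σ, hσ⟩ := ih (fun i => hR i.1) (fun j => hQ j.1) hrest hcard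
    let τ : ι ≃ κ :=
      (Equiv.optionSubtypeNe i₀).symm.trans (σ.optionCongr.trans (Equiv.optionSubtypeNe j₀))
    refine ⟨τ, fun i => ?_⟩
    by_cases hi : i = i₀
    · rw [hi, show τ i₀ = j₀ by simp [τ]]
      exact hi₀
    · rw [show τ i = σ ⟨i, hi⟩ by simp [τ, Equiv.optionSubtypeNe_symm_of_ne hi]]
      exact hσ ⟨i, hi⟩

end KrullSchmidt

theorem krull_schmidt_algebras_general (k : Type u) [Field k] (n m : ℕ)
    (R : Fin n → Type u) (Q : Fin m → Type u)
    [∀ i, NonUnitalRing (R i)] [∀ i, Module k (R i)]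
    [∀ i, SMulCommClass k (R i) (R i)] [∀ i, IsScalarTower k (R i) (R i)]
    [∀ j, NonUnitalRing (Q j)] [∀ j, Module k (Q j)]
    [∀ j, SMulCommClass k (Q j) (Q j)] [∀ j, IsScalarTower k (Q j) (Q j)]
    (hRnt : ∀ i, Nontrivial (R i)) (hQnt : ∀ j, Nontrivial (Q j))
    (hRfd : ∀ i, FiniteDimensional k (R i))
    (hRind : ∀ i, ¬ IsDecomposableAlg k (R i))
    (hQind : ∀ j, ¬ IsDecomposableAlg k (Q j))
    (hiso : NuAlgIso k (∀ i, R i) (∀ j, Q j)) :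
    n = m ∧ ∃ σ : Fin n ≃ Fin m, ∀ i, NuAlgIso k (R i) (Q (σ i)) := by
  obtain ⟨σ, hσ⟩ := krull_schmidt_pi hRind hQind hiso
  exact ⟨Fin.equiv_iff_eq.mp ⟨σ⟩, σ, hσ⟩

/-- **Krull–Schmidt theorem for finite-dimensional non-unital algebras**
(Theorem B of the paper). If `R₁ × ⋯ × Rₙ ≅ Q₁ × ⋯ × Q_m` as non-unital
`k`-algebras, where all factors are nonzero, finite-dimensional and
indecomposable, then `n = m` and, after a permutation, `Rᵢ ≅ Q_{σ(i)}`. -/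
theorem krull_schmidt_algebras (k : Type u) [Field k] (n m : ℕ)
    (R : Fin n → Type u) (Q : Fin m → Type u)
    [∀ i, NonUnitalRing (R i)] [∀ i, Module k (R i)]
    [∀ i, SMulCommClass k (R i) (R i)] [∀ i, IsScalarTower k (R i) (R i)]
    [∀ j, NonUnitalRing (Q j)] [∀ j, Module k (Q j)]
    [∀ j, SMulCommClass k (Q j) (Q j)] [∀ j, IsScalarTower k (Q j) (Q j)]
    (hRnt : ∀ i, Nontrivial (R i)) (hQnt : ∀ j, Nontrivial (Q j))
    (hRfd : ∀ i, FiniteDimensional k (R i)) (hQfd : ∀ j, FiniteDimensional k (Q j))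
    (hRind : ∀ i, ¬ IsDecomposableAlg k (R i))
    (hQind : ∀ j, ¬ IsDecomposableAlg k (Q j))
    (hiso : NuAlgIso k (∀ i, R i) (∀ j, Q j)) :
    n = m ∧ ∃ σ : Fin n ≃ Fin m, ∀ i, NuAlgIso k (R i) (Q (σ i)) :=
  krull_schmidt_algebras_general k n m R Q hRnt hQnt hRfd hRind hQind hiso
end

section
/- Let I and J be disjoint finite sets of natural numbers, and let σ ⊆ I and τ ⊆ J. Then θ(σ, I) + θ(τ, J) + θ(σ ∪ τ, I ∪ J) + θ(I \ σ, J \ τ) ≡ θ(I, J) + θ(τ, I) + θ(I \ σ, τ) (mod 2). -/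
/-! `θ` is additive in each argument over disjoint unions. Splitting `θ(σ ∪ τ, I ∪ J)` along
`σ ⊔ τ` and `I ⊔ J`, and `θ(I, J)` along `I = σ ⊔ (I \ σ)` and `J = τ ⊔ (J \ τ)`, every term
occurring twice cancels mod 2 and both sides reduce to `θ(σ, J) + θ(τ, I) + θ(I \ σ, J \ τ)`. -/

/-- `theta S T = Σ_{s ∈ S} #{t ∈ T : t < s}`, the number of pairs
`(s, t) ∈ S × T` with `t < s`. -/
def theta (S T : Finset ℕ) : ℕ :=
  ∑ s ∈ S, (T.filter fun t => t < s).card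

section theta

variable {S S' T T' : Finset ℕ}

lemma theta_union_left (T : Finset ℕ) (h : Disjoint S S') :
    theta (S ∪ S') T = theta S T + theta S' T :=
  Finset.sum_union h

lemma theta_union_right (S : Finset ℕ) (h : Disjoint T T') :
    theta S (T ∪ T') = theta S T + theta S T' := by
  rw [theta, theta, theta, ← Finset.sum_add_distrib]
  refine Finset.sum_congr rfl fun s _ => ?_
  rw [Finset.filter_union, Finset.card_union_of_disjoint (Finset.disjoint_filter_filter h)]

lemma theta_eq_add_sdiff_left (T : Finset ℕ) (h : S' ⊆ S) :
    theta S T = theta S' T + theta (S \ S') T := by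
  rw [← theta_union_left T Finset.disjoint_sdiff, Finset.union_sdiff_of_subset h]

lemma theta_eq_add_sdiff_right (S : Finset ℕ) (h : T' ⊆ T) :
    theta S T = theta S T' + theta S (T \ T') := by
  rw [← theta_union_right S Finset.disjoint_sdiff, Finset.union_sdiff_of_subset h]

end theta

/-- For disjoint finite sets `I, J` of natural numbers and subsets `σ ⊆ I`, `τ ⊆ J`:
`θ(σ,I) + θ(τ,J) + θ(σ∪τ, I∪J) + θ(I\σ, J\τ) ≡ θ(I,J) + θ(τ,I) + θ(I\σ, τ)  (mod 2)`. -/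
theorem theta_sign_congruence (I J σ τ : Finset ℕ)
    (hdisj : Disjoint I J) (hσ : σ ⊆ I) (hτ : τ ⊆ J) :
    theta σ I + theta τ J + theta (σ ∪ τ) (I ∪ J) + theta (I \ σ) (J \ τ) ≡
      theta I J + theta τ I + theta (I \ σ) τ [MOD 2] := by
  have hUnion : theta (σ ∪ τ) (I ∪ J) = theta σ I + theta σ J + theta τ I + theta τ J := by
    rw [theta_union_left _ (hdisj.mono hσ hτ), theta_union_right _ hdisj,
      theta_union_right _ hdisj, add_assoc (theta σ I + theta σ J)]
  have hIJ : theta I J = theta σ J + theta (I \ σ) τ + theta (I \ σ) (J \ τ) := by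
    rw [theta_eq_add_sdiff_left J hσ, theta_eq_add_sdiff_right (I \ σ) hτ, add_assoc]
  rw [Nat.ModEq, hUnion, hIJ]
  omega
end
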